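/- Let Q_3 be the 3-dimensional hypercube with vertex set {0,1}^3, rooted at r = (0,0,0). Define the weight function w' by w'(v) = 2 if v has exactly one coordinate equal to 1, w'(v) = 4/3 if v has exactly two coordinates equal to 1, w'((1,1,1)) = 1, and w'(r) = 0. Then w' is valid: every r-unsolvable configuration p on Q_3 satisfies w'(p) ≤ w'(1_{Q_3}) = 11. -/

import Mathlib

open SimpleGraph Finset

def PebMove {V : Type*} [DecidableEq V] (G : SimpleGraph V) (p q : V → ℕ) : Prop :=
  ∃ u v, G.Adj u v ∧ 2 ≤ p u ∧
    q = fun x => if x = u then p u - 2 else if x = v then p v + 1 else p x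

def Solvable {V : Type*} [DecidableEq V] (G : SimpleGraph V) (r : V) (p : V → ℕ) : Prop :=
  ∃ q, Relation.ReflTransGen (PebMove G) p q ∧ 1 ≤ q r

noncomputable def confWeight {V : Type*} [Fintype V] (w : V → ℝ) (p : V → ℕ) : ℝ :=
  ∑ v, (p v : ℝ) * w v

def ValidWeight {V : Type*} [Fintype V] [DecidableEq V] (G : SimpleGraph V) (r : V)
    (w : V → ℝ) : Prop :=
  w r = 0 ∧ (∀ v, v ≠ r → 0 < w v) ∧
    ∀ p : V → ℕ, ¬ Solvable G r p → confWeight w p ≤ confWeight w (fun _ => 1)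

noncomputable def rootedPebblingNumber {V : Type*} [Fintype V] [DecidableEq V]
    (G : SimpleGraph V) (r : V) : ℕ :=
  sInf {N | ∀ p : V → ℕ, N ≤ ∑ v, p v → Solvable G r p}

noncomputable def pebblingNumber {V : Type*} [Fintype V] [DecidableEq V]
    (G : SimpleGraph V) : ℕ :=
  sInf {N | ∀ (r : V) (p : V → ℕ), N ≤ ∑ v, p v → Solvable G r p}

def cubeGraph (n : ℕ) : SimpleGraph (Fin n → Bool) :=
  SimpleGraph.fromRel (fun x y => hammingDist x y = 1)

def addPendant {V : Type*} (G : SimpleGraph V) (a : V) : SimpleGraph (Option V) :=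
  SimpleGraph.fromRel (fun x y =>
    match x, y with
    | some u, some v => G.Adj u v
    | none, some u => u = a
    | _, _ => False)

def lollipop (n m : ℕ) : SimpleGraph (Fin (n + 1) ⊕ Fin (m + 1)) :=
  SimpleGraph.fromRel (fun x y =>
    match x, y with
    | Sum.inl i, Sum.inl j => (i : ℕ) + 1 = (j : ℕ)
    | Sum.inl i, Sum.inr j => i = 0 ∧ j ≠ 0
    | Sum.inr i, Sum.inr j => i = 0 ∧ j ≠ 0
    | _, _ => False)

noncomputable def w8 : (Fin 3 → Bool) → ℝ := fun v =>
  match (Finset.univ.filter fun i => v i = true).card with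
  | 0 => 0
  | 1 => 2
  | 2 => 4 / 3
  | _ => 1


/-! The weight `w8` is an average of tree-strategy weights: for `x` a neighbour of the root `0`,
`y, z` the two neighbours of `x` at level two and `y` adjacent to `111`, greedily pushing pebbles
along `111 → y → x`, `z → x` and `x → 0` shows `4 p(x) + 2 p(y) + 2 p(z) + p(111) ≤ 9` for every
unsolvable `p`. Adding the three such inequalities for a cyclic choice of `(x, y, z)` to twice the
bounds `p(x) ≤ 1` for the neighbours of the root gives exactly `3 w8(p) ≤ 33`. -/

section Pebbling

variable {V : Type*} [DecidableEq V] {G : SimpleGraph V} {r : V} {p q : V → ℕ}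

def transfer (u v : V) (n : ℕ) (p : V → ℕ) : V → ℕ :=
  Function.update (Function.update p u (p u - 2 * n)) v (p v + n)

theorem reflTransGen_pebMove_transfer {u v : V} (huv : G.Adj u v) :
    ∀ {n : ℕ}, 2 * n ≤ p u → Relation.ReflTransGen (PebMove G) p (transfer u v n p)
  | 0, _ => by
    rw [show transfer u v 0 p = p by simp [transfer]]
  | n + 1, hn => by
    refine (reflTransGen_pebMove_transfer huv (n := n) (by omega)).tail
      ⟨u, v, huv, ?_, ?_⟩
    · simp only [transfer, Function.update_of_ne huv.ne, Function.update_self]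
      omega
    funext x
    by_cases hxu : x = u
    · subst hxu
      simp only [transfer, Function.update_of_ne huv.ne, Function.update_self, ↓reduceIte]
      omega
    · by_cases hxv : x = v
      · subst hxv
        simp only [transfer, Function.update_self, if_neg hxu, ↓reduceIte]
        omega
      · simp [transfer, hxu, hxv]

theorem Solvable.of_reflTransGen (h : Relation.ReflTransGen (PebMove G) p q)
    (hq : Solvable G r q) : Solvable G r p :=
  let ⟨q', hq', hr⟩ := hq
  ⟨q', h.trans hq', hr⟩

theorem solvable_of_transfer {u v : V} {n : ℕ} (huv : G.Adj u v) (hn : 2 * n ≤ p u)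
    (h : Solvable G r (transfer u v n p)) : Solvable G r p :=
  h.of_reflTransGen (reflTransGen_pebMove_transfer huv hn)

theorem solvable_of_one_le (h : 1 ≤ p r) : Solvable G r p :=
  ⟨p, .refl, h⟩

theorem solvable_of_adj_root {u : V} (hu : G.Adj u r) (h : 2 ≤ p u) : Solvable G r p :=
  solvable_of_transfer (n := 1) hu h (solvable_of_one_le (by simp [transfer]))

theorem le_one_of_adj_root_of_not_solvable {u : V} (hu : G.Adj u r)
    (hp : ¬ Solvable G r p) : p u ≤ 1 := by
  by_contra h
  exact hp (solvable_of_adj_root hu (by omega))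

theorem tree_weight_le_nine_of_not_solvable {x y z t : V} (hxr : G.Adj x r)
    (hyx : G.Adj y x) (hzx : G.Adj z x) (hty : G.Adj t y) (hyz : y ≠ z) (htx : t ≠ x)
    (htz : t ≠ z) (hp : ¬ Solvable G r p) : 4 * p x + 2 * p y + 2 * p z + p t ≤ 9 := by
  by_contra! h
  apply hp
  refine solvable_of_transfer hty (n := p t / 2) (by omega) ?_
  refine solvable_of_transfer hyx (n := (p y + p t / 2) / 2)
    (by simp only [transfer, Function.update_self]; omega) ?_
  refine solvable_of_transfer hzx (n := p z / 2)
    (by simp [transfer, hyz.symm, htz.symm, hzx.ne]; omega) ?_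
  refine solvable_of_adj_root hxr ?_
  simp [transfer, hzx.ne, htx.symm, hyx.ne.symm]
  omega

end Pebbling

theorem cubeGraph_adj {n : ℕ} {x y : Fin n → Bool} :
    (cubeGraph n).Adj x y ↔ hammingDist x y = 1 := by
  simp only [cubeGraph, fromRel_adj, hammingDist_comm y x, or_self, and_iff_right_iff_imp]
  rintro h rfl
  simp at h

theorem confWeight_w8 (p : (Fin 3 → Bool) → ℕ) :
    confWeight w8 p =
      2 * (p ![true, false, false] + p ![false, true, false] + p ![false, false, true])
      + 4 / 3 * (p ![true, true, false] + p ![true, false, true] + p ![false, true, true])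
      + p ![true, true, true] := by
  have huniv : (univ : Finset (Fin 3 → Bool)) =
      {![false, false, false], ![true, false, false], ![false, true, false],
        ![false, false, true], ![true, true, false], ![true, false, true],
        ![false, true, true], ![true, true, true]} := by decide
  simp [confWeight, huniv, w8, filter_insert, filter_singleton, Fin.univ_succ]
  ring

theorem stmt8 :
    confWeight w8 (fun _ => 1) = 11 ∧
    ∀ p : (Fin 3 → Bool) → ℕ,
      ¬ Solvable (cubeGraph 3) (fun _ => false) p → confWeight w8 p ≤ 11 := by
  refine ⟨by rw [confWeight_w8]; norm_num, fun p hp => ?_⟩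
  have adj {x y : Fin 3 → Bool} (h : hammingDist x y = 1 := by decide) :
      (cubeGraph 3).Adj x y := cubeGraph_adj.2 h
  have ha := le_one_of_adj_root_of_not_solvable (u := ![true, false, false]) adj hp
  have hb := le_one_of_adj_root_of_not_solvable (u := ![false, true, false]) adj hp
  have hc := le_one_of_adj_root_of_not_solvable (u := ![false, false, true]) adj hp
  have t₁ := tree_weight_le_nine_of_not_solvable (x := ![true, false, false])
    (y := ![true, true, false]) (z := ![true, false, true]) (t := ![true, true, true])
    adj adj adj adj (by decide) (by decide) (by decide) hp
  have t₂ := tree_weight_le_nine_of_not_solvable (x := ![false, true, false])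
    (y := ![false, true, true]) (z := ![true, true, false]) (t := ![true, true, true])
    adj adj adj adj (by decide) (by decide) (by decide) hp
  have t₃ := tree_weight_le_nine_of_not_solvable (x := ![false, false, true])
    (y := ![true, false, true]) (z := ![false, true, true]) (t := ![true, true, true])
    adj adj adj adj (by decide) (by decide) (by decide) hp
  have hsum : 6 * (p ![true, false, false] + p ![false, true, false] + p ![false, false, true])
      + 4 * (p ![true, true, false] + p ![true, false, true] + p ![false, true, true])
      + 3 * p ![true, true, true] ≤ 33 := by omega
  have hsum' := (Nat.cast_le (α := ℝ)).2 hsum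
  push_cast at hsum'
  rw [confWeight_w8]
  linarith
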